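/- arXiv:1511.08537 — 6 statements merged into one kernel-verified Lean document; each statement's English description precedes it below -/
import Mathlib

section
/- Let M > 0 satisfy 2(1 + 4·∑_{j=0}^∞ (j+1)^{-2})·M ≤ 1/2, and define Γ₁(k) = M·k!/k³ for k ≥ 1 with Γ₁(0) = M. Then for every multi-index α (in ℕ^d), ∑_{α'+α''=α} binom(α, α') · Γ₁(|α'|) · Γ₁(|α''|) ≤ Γ₁(|α|)/2. -/
/-!
Grouping the multi-indices `α' ≤ α` by `|α'| = j` and using the multi-index Vandermonde identity
`∑_{|α'| = j} binom(α, α') = binom(|α|, j)` (compare coefficients of `(1 + X)^|α|`) reduces the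
sum to `∑_j binom(n, j) Γ₁(j) Γ₁(n - j)` with `n = |α|`. The two end terms give `2 M Γ₁(n)`.
For `0 < j < n` the factorials cancel: `binom(n, j) Γ₁(j) Γ₁(n - j) = M Γ₁(n) n³ / (j³ (n - j)³)`,
which is at most `4 M Γ₁(n) (j⁻³ + (n - j)⁻³)` because `n³ ≤ 4 (j³ + (n - j)³)`. Summing and
bounding `∑ j⁻³` by `∑ (j + 1)⁻²` gives `2 (1 + 4 ∑ (j + 1)⁻²) M Γ₁(n) ≤ Γ₁(n) / 2`.
-/

open Finset Polynomial
open scoped Nat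

section MultiIndexVandermonde

variable {ι : Type*} [Fintype ι] [DecidableEq ι]

theorem one_add_X_pow_eq_sum_Iic (m : ℕ) :
    (1 + X : ℕ[X]) ^ m = ∑ k ∈ Iic m, C (m.choose k) * X ^ k := by
  ext c
  simp only [coeff_one_add_X_pow, finsetSum_coeff, coeff_C_mul_X_pow, sum_ite_eq, mem_Iic]
  split_ifs with h
  · rfl
  · exact Nat.choose_eq_zero_of_lt (not_le.mp h)

theorem one_add_X_pow_sum_eq_sum_Iic (α : ι → ℕ) :
    (1 + X : ℕ[X]) ^ ∑ i, α i =
      ∑ x ∈ Iic α, C (∏ i, (α i).choose (x i)) * X ^ ∑ i, x i := by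
  rw [← prod_pow_eq_pow_sum]
  simp_rw [one_add_X_pow_eq_sum_Iic, prod_univ_sum, prod_mul_distrib, prod_pow_eq_pow_sum,
    ← map_prod]
  rfl

theorem sum_Iic_filter_prod_choose (α : ι → ℕ) (j : ℕ) :
    ∑ x ∈ Iic α with ∑ i, x i = j, ∏ i, (α i).choose (x i) = (∑ i, α i).choose j := by
  have := congrArg (coeff · j) (one_add_X_pow_sum_eq_sum_Iic α)
  simp only [coeff_one_add_X_pow, finsetSum_coeff, coeff_C_mul_X_pow, Nat.cast_id] at this
  rw [this, sum_filter]
  simp_rw [eq_comm]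

theorem sum_Iic_prod_choose_mul {R : Type*} [CommSemiring R] (α : ι → ℕ)
    (g : ℕ → ℕ → R) :
    ∑ x ∈ Iic α, (∏ i, ((α i).choose (x i) : R)) * g (∑ i, x i) (∑ i, (α i - x i)) =
      ∑ j ∈ range (∑ i, α i + 1), ((∑ i, α i).choose j : R) * g j (∑ i, α i - j) := by
  have hsub : ∀ x ∈ Iic α, ∑ i, (α i - x i) = ∑ i, α i - ∑ i, x i := fun x hx =>
    sum_tsub_distrib _ fun i _ => mem_Iic.mp hx i
  have hmaps : ∀ x ∈ Iic α, ∑ i, x i ∈ range (∑ i, α i + 1) := fun x hx =>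
    mem_range_succ_iff.mpr (sum_le_sum fun i _ => mem_Iic.mp hx i)
  rw [sum_congr rfl fun x hx => by rw [hsub x hx], ← sum_fiberwise_of_maps_to hmaps]
  refine sum_congr rfl fun j _ => ?_
  rw [sum_congr rfl fun x hx => by rw [(mem_filter.mp hx).2], ← sum_mul,
    ← sum_Iic_filter_prod_choose α j]
  push_cast
  rfl

end MultiIndexVandermonde

noncomputable def factorialCubeWeight (M : ℝ) (k : ℕ) : ℝ :=
  if k = 0 then M else M * k ! / (k : ℝ) ^ 3

section FactorialCubeWeight

variable {M : ℝ}

theorem factorialCubeWeight_zero : factorialCubeWeight M 0 = M := if_pos rfl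

theorem factorialCubeWeight_of_ne_zero {k : ℕ} (hk : k ≠ 0) :
    factorialCubeWeight M k = M * k ! / (k : ℝ) ^ 3 := if_neg hk

theorem factorialCubeWeight_pos (hM : 0 < M) (k : ℕ) : 0 < factorialCubeWeight M k := by
  unfold factorialCubeWeight
  split_ifs with hk
  · exact hM
  · have : (0 : ℝ) < k := by exact_mod_cast Nat.pos_of_ne_zero hk
    positivity

theorem add_pow_three_div_le {a b : ℝ} (ha : 0 < a) (hb : 0 < b) :
    (a + b) ^ 3 / (a ^ 3 * b ^ 3) ≤ 4 * (1 / a ^ 3 + 1 / b ^ 3) := by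
  rw [div_le_iff₀ (by positivity)]
  calc (a + b) ^ 3 ≤ 2 ^ 2 * (a ^ 3 + b ^ 3) := add_pow_le ha.le hb.le 3
    _ = 4 * (1 / a ^ 3 + 1 / b ^ 3) * (a ^ 3 * b ^ 3) := by field_simp; ring

theorem choose_mul_factorialCubeWeight_le (hM : 0 ≤ M) {j k : ℕ} (hj : j ≠ 0) (hk : k ≠ 0) :
    ((j + k).choose j : ℝ) * (factorialCubeWeight M j * factorialCubeWeight M k) ≤
      4 * M * factorialCubeWeight M (j + k) * (1 / (j : ℝ) ^ 3 + 1 / (k : ℝ) ^ 3) := by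
  have hj' : (0 : ℝ) < j := by exact_mod_cast Nat.pos_of_ne_zero hj
  have hk' : (0 : ℝ) < k := by exact_mod_cast Nat.pos_of_ne_zero hk
  have hfac : ((j + k).choose j : ℝ) * j ! * k ! = (j + k)! := by
    exact_mod_cast Nat.choose_symm_add ▸ Nat.add_choose_mul_factorial_mul_factorial j k
  rw [factorialCubeWeight_of_ne_zero hj, factorialCubeWeight_of_ne_zero hk,
    factorialCubeWeight_of_ne_zero (by omega)]
  calc ((j + k).choose j : ℝ) * (M * j ! / (j : ℝ) ^ 3 * (M * k ! / (k : ℝ) ^ 3))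
      = M * (M * (j + k)! / ((j + k : ℕ) : ℝ) ^ 3) * ((j + k) ^ 3 / (j ^ 3 * k ^ 3)) := by
        rw [← hfac]; push_cast; field_simp
    _ ≤ M * (M * (j + k)! / ((j + k : ℕ) : ℝ) ^ 3) *
          (4 * (1 / (j : ℝ) ^ 3 + 1 / (k : ℝ) ^ 3)) := by
        gcongr
        exact add_pow_three_div_le hj' hk'
    _ = _ := by ring

theorem summable_one_div_add_one_sq : Summable fun j : ℕ => (1 : ℝ) / (j + 1) ^ 2 := by
  simpa using (summable_nat_add_iff 1).mpr (Real.summable_one_div_nat_pow.mpr one_lt_two)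

theorem sum_Ico_one_div_pow_three_le_tsum (n : ℕ) :
    ∑ j ∈ Ico 1 n, 1 / (j : ℝ) ^ 3 ≤ ∑' j : ℕ, (1 : ℝ) / (j + 1) ^ 2 := by
  rw [sum_Ico_eq_sum_range]
  calc ∑ j ∈ range (n - 1), 1 / ((1 + j : ℕ) : ℝ) ^ 3
      ≤ ∑ j ∈ range (n - 1), (1 : ℝ) / (j + 1) ^ 2 := by
        refine sum_le_sum fun j _ => ?_
        rw [Nat.cast_add, Nat.cast_one, add_comm]
        gcongr
        · exact le_add_of_nonneg_left j.cast_nonneg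
        · norm_num
    _ ≤ _ := summable_one_div_add_one_sq.sum_le_tsum _ fun j _ => by positivity

theorem sum_range_choose_mul_factorialCubeWeight_le (hM : 0 < M) (n : ℕ) :
    ∑ j ∈ range (n + 1),
        (n.choose j : ℝ) * (factorialCubeWeight M j * factorialCubeWeight M (n - j)) ≤
      2 * (1 + 4 * ∑' j : ℕ, (1 : ℝ) / (j + 1) ^ 2) * M * factorialCubeWeight M n := by
  set S := ∑' j : ℕ, (1 : ℝ) / (j + 1) ^ 2
  have hS : 0 ≤ S := tsum_nonneg fun j => by positivity
  rcases Nat.eq_zero_or_pos n with rfl | hn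
  · simp only [zero_add, range_one, sum_singleton, Nat.choose_self, Nat.cast_one, one_mul,
      Nat.sub_self, factorialCubeWeight_zero]
    nlinarith
  have hw := factorialCubeWeight_pos hM n
  have hmiddle : ∑ j ∈ Ico 1 n, (n.choose j : ℝ) *
      (factorialCubeWeight M j * factorialCubeWeight M (n - j)) ≤
        4 * M * factorialCubeWeight M n * (2 * S) := by
    calc _ ≤ ∑ j ∈ Ico 1 n, 4 * M * factorialCubeWeight M n *
          (1 / (j : ℝ) ^ 3 + 1 / ((n - j : ℕ) : ℝ) ^ 3) := by
          refine sum_le_sum fun j hj => ?_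
          obtain ⟨hj1, hjn⟩ := mem_Ico.mp hj
          obtain ⟨k, rfl⟩ := Nat.exists_eq_add_of_le hjn.le
          rw [Nat.add_sub_cancel_left]
          exact choose_mul_factorialCubeWeight_le hM.le (by omega) (by omega)
      _ = 4 * M * factorialCubeWeight M n * (2 * ∑ j ∈ Ico 1 n, 1 / (j : ℝ) ^ 3) := by
          rw [← mul_sum, sum_add_distrib, sum_Ico_reflect (fun j => 1 / (j : ℝ) ^ 3) 1 n.le_succ,
            Nat.add_sub_cancel_left, Nat.add_sub_cancel, two_mul]
      _ ≤ _ := by gcongr; exact sum_Ico_one_div_pow_three_le_tsum n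
  rw [sum_range_succ, range_eq_Ico, sum_eq_sum_Ico_succ_bot hn]
  simp only [Nat.choose_zero_right, Nat.choose_self, Nat.cast_one, one_mul, Nat.sub_zero,
    Nat.sub_self, factorialCubeWeight_zero]
  linarith

end FactorialCubeWeight

theorem stmt_0 (d : ℕ) (M : ℝ) (hM0 : 0 < M)
    (hM : 2 * (1 + 4 * (∑' j : ℕ, (1 : ℝ) / (j + 1) ^ 2)) * M ≤ 1 / 2)
    (Γ₁ : ℕ → ℝ) (hΓ0 : Γ₁ 0 = M)
    (hΓ : ∀ k : ℕ, 1 ≤ k → Γ₁ k = M * (Nat.factorial k) / (k : ℝ) ^ 3)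
    (α : Fin d → ℕ) :
    ∑ α' ∈ Finset.Iic α,
      (∏ i, ((α i).choose (α' i)) : ℝ) * Γ₁ (∑ i, α' i) * Γ₁ (∑ i, (α i - α' i))
      ≤ Γ₁ (∑ i, α i) / 2 := by
  obtain rfl : Γ₁ = factorialCubeWeight M := funext fun k => by
    rcases eq_or_ne k 0 with rfl | hk
    · rw [hΓ0, factorialCubeWeight_zero]
    · rw [hΓ k (Nat.one_le_iff_ne_zero.mpr hk), factorialCubeWeight_of_ne_zero hk]
  simp_rw [mul_assoc]
  rw [sum_Iic_prod_choose_mul α fun a b => factorialCubeWeight M a * factorialCubeWeight M b]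
  have hw := factorialCubeWeight_pos hM0 (∑ i, α i)
  calc _ ≤ 2 * (1 + 4 * ∑' j : ℕ, (1 : ℝ) / (j + 1) ^ 2) * M *
        factorialCubeWeight M (∑ i, α i) :=
        sum_range_choose_mul_factorialCubeWeight_le hM0 _
    _ ≤ 1 / 2 * factorialCubeWeight M (∑ i, α i) := by gcongr
    _ = _ := by ring
end

section
/- For every s ≥ 1 there is a constant C > 0, independent of n, m ∈ ℕ and of A, B ≥ 0, such that (A + n + m + (n+m)^s·B)^{n+m} ≤ C^{n+m} · (A + n + n^s·B)^n · (A + m + m^s·B)^m. -/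
set_option maxHeartbeats 1000000

open Real in
lemma stmt_1_aux (s : ℝ) (hs : 1 ≤ s) (n m : ℕ) (hnm : n ≤ m) (A B : ℝ)
    (hA : 0 ≤ A) (hB : 0 ≤ B) :
    (A + n + m + ((n + m : ℕ) : ℝ) ^ s * B) ^ (n + m) ≤
      ((2:ℝ) ^ s * 2 * Real.exp s) ^ (n + m) * (A + n + (n : ℝ) ^ s * B) ^ n *
        (A + m + (m : ℝ) ^ s * B) ^ m := by
  have hs0 : (0:ℝ) ≤ s := le_trans zero_le_one hs
  set x : ℝ := (n : ℝ) with hxdef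
  set y : ℝ := (m : ℝ) with hydef
  have hx0 : 0 ≤ x := Nat.cast_nonneg n
  have hy0 : 0 ≤ y := Nat.cast_nonneg m
  have hxy : x ≤ y := Nat.cast_le.mpr hnm
  have hxs0 : 0 ≤ x ^ s := Real.rpow_nonneg hx0 s
  have hys0 : 0 ≤ y ^ s := Real.rpow_nonneg hy0 s
  have hX0 : 0 ≤ A + x + x ^ s * B := by positivity
  have hY0 : 0 ≤ A + y + y ^ s * B := by positivity
  have h2s : (1:ℝ) ≤ 2 ^ s := Real.one_le_rpow one_le_two hs0
  have hcast : ((n + m : ℕ) : ℝ) = x + y := by push_cast; ring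
  have hL0 : 0 ≤ A + x + y + ((n + m : ℕ) : ℝ) ^ s * B := by
    have : 0 ≤ ((n + m : ℕ) : ℝ) ^ s := Real.rpow_nonneg (Nat.cast_nonneg _) s
    positivity
  -- Step 1: L ≤ 2^s * 2 * Y
  have hL : A + x + y + ((n + m : ℕ) : ℝ) ^ s * B ≤ 2 ^ s * 2 * (A + y + y ^ s * B) := by
    have h1 : ((n + m : ℕ) : ℝ) ^ s ≤ 2 ^ s * y ^ s := by
      rw [hcast, ← Real.mul_rpow (by norm_num) hy0]
      exact Real.rpow_le_rpow (by linarith) (by linarith) hs0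
    have h1' : ((n + m : ℕ) : ℝ) ^ s * B ≤ 2 ^ s * (y ^ s * B) := by
      calc ((n + m : ℕ) : ℝ) ^ s * B ≤ (2 ^ s * y ^ s) * B :=
            mul_le_mul_of_nonneg_right h1 hB
        _ = 2 ^ s * (y ^ s * B) := by ring
    have hA' : A ≤ 2 ^ s * 2 * A := by nlinarith
    have hy' : x + y ≤ 2 ^ s * 2 * y := by nlinarith
    have ht : 2 ^ s * (y ^ s * B) ≤ 2 ^ s * 2 * (y ^ s * B) := by
      have : 0 ≤ 2 ^ s * (y ^ s * B) := by positivity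
      nlinarith
    calc A + x + y + ((n + m : ℕ) : ℝ) ^ s * B
        ≤ 2 ^ s * 2 * A + 2 ^ s * 2 * y + 2 ^ s * 2 * (y ^ s * B) := by
          linarith
      _ = 2 ^ s * 2 * (A + y + y ^ s * B) := by ring
  -- Step 2: Y^n ≤ exp(s)^(n+m) * X^n
  have hexp1 : (1:ℝ) ≤ Real.exp s := by
    have := Real.add_one_le_exp s; linarith
  have hstep2 : (A + y + y ^ s * B) ^ n ≤ Real.exp s ^ (n + m) * (A + x + x ^ s * B) ^ n := by
    rcases Nat.eq_zero_or_pos n with h0 | hn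
    · subst h0
      simpa using one_le_pow₀ hexp1
    · have hx1 : (1:ℝ) ≤ x := by have h' : (1:ℕ) ≤ n := hn; rw [hxdef]; exact_mod_cast h'
      have hxpos : (0:ℝ) < x := lt_of_lt_of_le one_pos hx1
      have hr1 : (1:ℝ) ≤ y / x := (one_le_div hxpos).mpr hxy
      have hrpos : (0:ℝ) < y / x := lt_of_lt_of_le one_pos hr1
      set r : ℝ := (y / x) ^ s with hrdef
      have hr : (1:ℝ) ≤ r := Real.one_le_rpow hr1 hs0
      have hrx : r * x ^ s = y ^ s := by
        rw [hrdef, ← Real.mul_rpow (le_of_lt hrpos) hx0, div_mul_cancel₀ _ (ne_of_gt hxpos)]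
      have hYrX : A + y + y ^ s * B ≤ r * (A + x + x ^ s * B) := by
        have h1 : y ≤ r * x := by
          have h2 : y / x ≤ r := by
            calc y / x = (y / x) ^ (1:ℝ) := (Real.rpow_one _).symm
              _ ≤ (y / x) ^ s := Real.rpow_le_rpow_of_exponent_le hr1 hs
          calc y = y / x * x := (div_mul_cancel₀ _ (ne_of_gt hxpos)).symm
            _ ≤ r * x := mul_le_mul_of_nonneg_right h2 hx0
        have hAr : A ≤ r * A := by nlinarith
        have : y ^ s * B = r * (x ^ s * B) := by rw [← hrx]; ring
        linarith [this.le]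
      have h3 : (A + y + y ^ s * B) ^ n ≤ (r * (A + x + x ^ s * B)) ^ n :=
        pow_le_pow_left₀ hY0 hYrX n
      have h4 : r ^ n ≤ Real.exp s ^ (n + m) := by
        have hrn : r ^ n = ((y / x) ^ (n : ℝ)) ^ s := by
          rw [hrdef, ← Real.rpow_natCast ((y/x)^s) n, ← Real.rpow_mul (le_of_lt hrpos),
            mul_comm s, Real.rpow_mul (le_of_lt hrpos)]
        have h5 : (y / x) ^ (n : ℝ) ≤ Real.exp y := by
          rw [Real.rpow_def_of_pos hrpos]
          apply Real.exp_le_exp.mpr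
          have hlog : Real.log (y / x) ≤ y / x := by
            have := Real.log_le_sub_one_of_pos hrpos; linarith
          calc Real.log (y / x) * (n : ℝ) = Real.log (y / x) * x := by rw [hxdef]
            _ ≤ (y / x) * x := mul_le_mul_of_nonneg_right hlog hx0
            _ = y := div_mul_cancel₀ _ (ne_of_gt hxpos)
        have h6 : ((y / x) ^ (n : ℝ)) ^ s ≤ (Real.exp y) ^ s :=
          Real.rpow_le_rpow (Real.rpow_nonneg (le_of_lt hrpos) _) h5 hs0
        have h7 : (Real.exp y) ^ s = Real.exp (y * s) := by
          rw [← Real.exp_mul]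
        have h8 : Real.exp (y * s) ≤ Real.exp s ^ (n + m) := by
          rw [← Real.exp_nat_mul]
          apply Real.exp_le_exp.mpr
          have : y * s ≤ (x + y) * s := by nlinarith
          calc y * s ≤ (x + y) * s := this
            _ = ((n + m : ℕ) : ℝ) * s := by rw [hcast]
        rw [hrn]
        calc ((y / x) ^ (n : ℝ)) ^ s ≤ (Real.exp y) ^ s := h6
          _ = Real.exp (y * s) := h7
          _ ≤ Real.exp s ^ (n + m) := h8
      calc (A + y + y ^ s * B) ^ n ≤ (r * (A + x + x ^ s * B)) ^ n := h3
        _ = r ^ n * (A + x + x ^ s * B) ^ n := mul_pow _ _ _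
        _ ≤ Real.exp s ^ (n + m) * (A + x + x ^ s * B) ^ n :=
            mul_le_mul_of_nonneg_right h4 (pow_nonneg hX0 n)
  -- Combine
  calc (A + x + y + ((n + m : ℕ) : ℝ) ^ s * B) ^ (n + m)
      ≤ (2 ^ s * 2 * (A + y + y ^ s * B)) ^ (n + m) := pow_le_pow_left₀ hL0 hL _
    _ = (2 ^ s * 2) ^ (n + m) * ((A + y + y ^ s * B) ^ n * (A + y + y ^ s * B) ^ m) := by
        rw [mul_pow]; ring
    _ ≤ (2 ^ s * 2) ^ (n + m) * ((Real.exp s ^ (n + m) * (A + x + x ^ s * B) ^ n) *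
          (A + y + y ^ s * B) ^ m) := by
        apply mul_le_mul_of_nonneg_left _ (by positivity)
        exact mul_le_mul_of_nonneg_right hstep2 (pow_nonneg hY0 m)
    _ = ((2:ℝ) ^ s * 2 * Real.exp s) ^ (n + m) * (A + x + x ^ s * B) ^ n *
          (A + y + y ^ s * B) ^ m := by
        rw [mul_pow]; ring

theorem stmt_1 (s : ℝ) (hs : 1 ≤ s) :
    ∃ C > (0 : ℝ), ∀ (n m : ℕ) (A B : ℝ), 0 ≤ A → 0 ≤ B →
      (A + n + m + ((n + m : ℕ) : ℝ) ^ s * B) ^ (n + m) ≤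
        C ^ (n + m) * (A + n + (n : ℝ) ^ s * B) ^ n * (A + m + (m : ℝ) ^ s * B) ^ m := by
  refine ⟨(2:ℝ) ^ s * 2 * Real.exp s, by positivity, ?_⟩
  intro n m A B hA hB
  rcases le_total n m with h | h
  · exact stmt_1_aux s hs n m h A B hA hB
  · have key := stmt_1_aux s hs m n h A B hA hB
    rw [Nat.add_comm m n] at key
    have e1 : A + (m:ℝ) + (n:ℝ) = A + (n:ℝ) + (m:ℝ) := by ring
    rw [e1] at key
    calc (A + n + m + ((n + m : ℕ) : ℝ) ^ s * B) ^ (n + m)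
        ≤ ((2:ℝ) ^ s * 2 * Real.exp s) ^ (n + m) * (A + m + (m:ℝ) ^ s * B) ^ m *
            (A + n + (n:ℝ) ^ s * B) ^ n := key
      _ = ((2:ℝ) ^ s * 2 * Real.exp s) ^ (n + m) * (A + n + (n:ℝ) ^ s * B) ^ n *
            (A + m + (m:ℝ) ^ s * B) ^ m := by ring
end

section
/- Let c₁,...,c_ℓ be distinct positive reals with c = max_j c_j < 1, and let Γ = {(y,η) ∈ ℝ^{2(n+1)} : η₀ > √c·√((y₀−y₁)² + η₁²)}. Suppose X = (t, t, x₂,...,x_n, 0, 0, ξ₂,...,ξ_n) ∈ ℝ^{2(n+1)} satisfies σ(X,Y) ≤ 0 for all Y ∈ Γ, where σ is the standard symplectic form σ((x,ξ),(y,η)) = ⟨ξ, y⟩ − ⟨x, η⟩. Then X = 0. -/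
open Finset

/-- transversality computation from Example 1.2 when `max cⱼ < 1`. -/
theorem stmt_4 (n ℓ : ℕ) (hℓ : 1 ≤ ℓ) (c : Fin ℓ → ℝ)
    (hpos : ∀ j, 0 < c j) (hdist : Function.Injective c)
    (cm : ℝ) (hle : ∀ j, c j ≤ cm) (hmem : ∃ j, c j = cm) (hc1 : cm < 1)
    (x ξ : Fin (n + 2) → ℝ)
    (hx : x 0 = x 1) (hξ0 : ξ 0 = 0) (hξ1 : ξ 1 = 0)
    (hσ : ∀ y η : Fin (n + 2) → ℝ,
      Real.sqrt cm * Real.sqrt ((y 0 - y 1) ^ 2 + (η 1) ^ 2) < η 0 →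
      (∑ i, ξ i * y i) - (∑ i, x i * η i) ≤ 0) :
    x = 0 ∧ ξ = 0 := by
  have hcm0 : 0 < cm := by obtain ⟨j, hj⟩ := hmem; exact hj ▸ hpos j
  have hs1 : Real.sqrt cm < 1 := by
    rw [show (1:ℝ) = Real.sqrt 1 by simp]
    exact Real.sqrt_lt_sqrt hcm0.le hc1
  have hs0 : 0 ≤ Real.sqrt cm := Real.sqrt_nonneg _
  -- Step A: x 0 ≥ 0
  have hA : 0 ≤ x 0 := by
    have := hσ (fun _ => 0) (fun i => if i = 0 then 1 else 0) (by norm_num)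
    simp [Finset.sum_ite_eq'] at this
    linarith
  -- Step B: x 0 ≤ 0
  have hB : x 0 ≤ 0 := by
    set a : ℝ := (Real.sqrt cm + 1) / 2 with ha
    have hcon : Real.sqrt cm * Real.sqrt ((0 - 0 : ℝ) ^ 2 + (-1 : ℝ) ^ 2) < a := by
      norm_num [ha]; linarith
    have key : ∀ z : Fin n, (z.succ.succ : Fin (n+2)) ≠ 1 := fun z h =>
      Fin.succ_ne_zero z (Fin.succ_injective _ (by rw [h, ← Fin.succ_zero_eq_one]))
    have := hσ (fun _ => 0)
      (fun i => if i = 0 then a else if i = 1 then -1 else 0) hcon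
    rw [Fin.sum_univ_succ (f := fun i => x i * _),
        Fin.sum_univ_succ (f := fun i : Fin (n+1) => x i.succ * _)] at this
    simp [Fin.succ_ne_zero, key] at this
    rw [← hx] at this
    nlinarith [this, hs1]
  have hx0 : x 0 = 0 := le_antisymm hB hA
  have hx1 : x 1 = 0 := hx ▸ hx0
  -- Step C: all squares vanish
  have hC := hσ (fun i => ξ i) (fun i => if i = 0 then 1 else -(x i)) (by
    simp [hξ0, hξ1, hx1, show (1 : Fin (n+2)) ≠ 0 from one_ne_zero])
  rw [Fin.sum_univ_succ (f := fun i => x i * _)] at hC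
  simp [Fin.succ_ne_zero, hx0] at hC
  have hsum : (∑ i, ξ i * ξ i) + (∑ i : Fin (n+1), x i.succ * x i.succ) ≤ 0 := by
    linarith
  have h1 : (∑ i, ξ i * ξ i) = 0 := by
    have n1 : (0:ℝ) ≤ ∑ i, ξ i * ξ i := Finset.sum_nonneg fun i _ => mul_self_nonneg _
    have n2 : (0:ℝ) ≤ ∑ i : Fin (n+1), x i.succ * x i.succ :=
      Finset.sum_nonneg fun i _ => mul_self_nonneg _
    linarith
  have h2 : (∑ i : Fin (n+1), x i.succ * x i.succ) = 0 := by
    have n1 : (0:ℝ) ≤ ∑ i, ξ i * ξ i := Finset.sum_nonneg fun i _ => mul_self_nonneg _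
    have n2 : (0:ℝ) ≤ ∑ i : Fin (n+1), x i.succ * x i.succ :=
      Finset.sum_nonneg fun i _ => mul_self_nonneg _
    linarith
  constructor
  · funext i
    induction i using Fin.cases with
    | zero => exact hx0
    | succ j =>
      have := (Finset.sum_eq_zero_iff_of_nonneg
        (fun i _ => mul_self_nonneg (x i.succ))).mp h2 j (Finset.mem_univ j)
      have := mul_self_eq_zero.mp this
      simpa using this
  · funext i
    have := (Finset.sum_eq_zero_iff_of_nonneg
      (fun i _ => mul_self_nonneg (ξ i))).mp h1 i (Finset.mem_univ i)
    simpa using mul_self_eq_zero.mp this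
end

section
/- Let c₁,...,c_ℓ be distinct positive reals with c = max_j c_j, and let Γ = {(y,η) ∈ ℝ^{2(n+1)} : η₀ > √c·√(y₀² + η₁²)}. Suppose X = (0, x₁,...,x_n, 0, ξ₁,...,ξ_n) satisfies σ(X,Y) ≤ 0 for all Y ∈ Γ, where σ((x,ξ),(y,η)) = ⟨ξ,y⟩ − ⟨x,η⟩. Then X = 0. -/
open Finset

/-- transversality computation from Example 1.3, any `c = max cⱼ > 0`. -/
theorem stmt_6 (n ℓ : ℕ) (hℓ : 1 ≤ ℓ) (c : Fin ℓ → ℝ)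
    (hpos : ∀ j, 0 < c j) (hdist : Function.Injective c)
    (cm : ℝ) (hle : ∀ j, c j ≤ cm) (hmem : ∃ j, c j = cm)
    (x ξ : Fin (n + 2) → ℝ)
    (hx : x 0 = 0) (hξ0 : ξ 0 = 0)
    (hσ : ∀ y η : Fin (n + 2) → ℝ,
      Real.sqrt cm * Real.sqrt ((y 0) ^ 2 + (η 1) ^ 2) < η 0 →
      (∑ i, ξ i * y i) - (∑ i, x i * η i) ≤ 0) :
    x = 0 ∧ ξ = 0 := by
  have h10 : (1 : Fin (n + 2)) ≠ 0 := one_ne_zero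
  -- ξ = 0
  have hξ : ∀ j : Fin (n + 2), ξ j = 0 := by
    intro j
    have key : ∀ t : ℝ, ξ j * t ≤ 0 := by
      intro t
      set y : Fin (n + 2) → ℝ := Pi.single j t with hy
      set M : ℝ := Real.sqrt cm * Real.sqrt ((y 0) ^ 2 + 0 ^ 2) + 1 with hM
      set η : Fin (n + 2) → ℝ := Pi.single 0 M with hη
      have hη1 : η 1 = 0 := by simp [hη, Pi.single_eq_of_ne h10]
      have hη0 : η 0 = M := by simp [hη]
      have hcond : Real.sqrt cm * Real.sqrt ((y 0) ^ 2 + (η 1) ^ 2) < η 0 := by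
        rw [hη1, hη0, hM]; linarith
      have h := hσ y η hcond
      have hs1 : (∑ i, ξ i * y i) = ξ j * t := by
        simp [hy, Pi.single_apply, mul_ite, Finset.sum_ite_eq']
      have hs2 : (∑ i, x i * η i) = x 0 * M := by
        simp [hη, Pi.single_apply, mul_ite, Finset.sum_ite_eq']
      rw [hs1, hs2, hx] at h
      linarith
    nlinarith [key (ξ j), sq_nonneg (ξ j)]
  -- x = 0
  have hxx : ∀ k : Fin (n + 2), x k = 0 := by
    intro k
    by_cases hk0 : k = 0
    · rw [hk0]; exact hx
    have key : ∀ s : ℝ, -(x k * s) ≤ 0 := by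
      intro s
      set η1v : ℝ := if (1 : Fin (n + 2)) = k then s else 0 with hη1v
      set M : ℝ := Real.sqrt cm * Real.sqrt ((0 : ℝ) ^ 2 + η1v ^ 2) + 1 with hM
      set η : Fin (n + 2) → ℝ := fun i => (if i = 0 then M else 0) + (if i = k then s else 0)
        with hη
      have hη0 : η 0 = M := by simp [hη, Ne.symm hk0]
      have hη1 : η 1 = η1v := by simp [hη, h10, hη1v]
      have hcond : Real.sqrt cm * Real.sqrt (((0 : Fin (n+2) → ℝ) 0) ^ 2 + (η 1) ^ 2) < η 0 := by
        rw [hη1, hη0, hM]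
        have : ((0 : Fin (n+2) → ℝ) 0) = 0 := rfl
        rw [this]; linarith
      have h := hσ 0 η hcond
      have hs1 : (∑ i, ξ i * (0 : Fin (n+2) → ℝ) i) = 0 := by simp
      have hs2 : (∑ i, x i * η i) = x 0 * M + x k * s := by
        simp only [hη, mul_add, Finset.sum_add_distrib, mul_ite, mul_zero,
          Finset.sum_ite_eq', Finset.mem_univ, if_true]
      rw [hs1, hs2, hx] at h
      linarith
    nlinarith [key (-(x k)), sq_nonneg (x k)]
  exact ⟨funext hxx, funext hξ⟩
end

section
/- Let q₁,...,q_m be complex numbers and for 0 ≤ j ≤ m set h_j = ∑_{1≤ℓ₁<...<ℓ_j≤m} |q_{ℓ₁}|²···|q_{ℓ_j}|² (with h₀ = 1). Suppose each q_ℓ has |Im q_ℓ| ≥ a > 0. Then for 1 ≤ k ≤ j ≤ m one has h_{m-k} ≥ c·a^{2(j-k)}·h_{m-j}, where c > 0 depends only on m. -/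
open Finset

/-!
Lower bounds `|Im q_ℓ| ≥ a` give `x_ℓ := |q_ℓ|² ≥ a²`. Let `T` be an `(m-j)`-subset maximising
`∏_T x`; then `h_{m-j} ≤ 2^m ∏_T x`. Enlarging `T` to an `(m-k)`-subset `S` multiplies the
product by `j - k` factors each at least `a²`, so `a^{2(j-k)} ∏_T x ≤ ∏_S x ≤ h_{m-k}`,
and `c = 2^{-m}` works.
-/

section

variable {ι : Type*}

lemma pow_card_sdiff_mul_prod_le_prod {x : ι → ℝ} {b : ℝ} {S T : Finset ι} (hTS : T ⊆ S)
    (hb : 0 ≤ b) (hbx : ∀ i ∈ S, b ≤ x i) :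
    b ^ (#S - #T) * ∏ i ∈ T, x i ≤ ∏ i ∈ S, x i := by
  classical
  rw [← prod_sdiff hTS, ← card_sdiff_of_subset hTS, ← prod_const]
  gcongr with i hi
  · exact prod_nonneg fun i hi => hb.trans (hbx i (hTS hi))
  · exact hbx i (sdiff_subset hi)

variable [Fintype ι]

lemma exists_mem_powersetCard_sum_le_two_pow_mul {t : ℕ} (ht : t ≤ Fintype.card ι)
    (f : Finset ι → ℝ) (hf : ∀ U, 0 ≤ f U) :
    ∃ T ∈ (univ : Finset ι).powersetCard t,
      ∑ U ∈ (univ : Finset ι).powersetCard t, f U ≤ 2 ^ Fintype.card ι * f T := by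
  have hne : ((univ : Finset ι).powersetCard t).Nonempty :=
    powersetCard_nonempty.2 (by rwa [card_univ])
  obtain ⟨T, hT, hTmax⟩ := exists_max_image _ f hne
  refine ⟨T, hT, ?_⟩
  have hcard : (#((univ : Finset ι).powersetCard t) : ℝ) ≤ 2 ^ Fintype.card ι := by
    rw [card_powersetCard, card_univ]
    exact_mod_cast Nat.choose_le_two_pow _ _
  calc ∑ U ∈ (univ : Finset ι).powersetCard t, f U
      ≤ #((univ : Finset ι).powersetCard t) * f T := by
        simpa only [nsmul_eq_mul] using sum_le_card_nsmul _ _ _ hTmax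
    _ ≤ 2 ^ Fintype.card ι * f T := mul_le_mul_of_nonneg_right hcard (hf T)

lemma pow_sub_mul_sum_powersetCard_prod_le {x : ι → ℝ} {b : ℝ} (hb : 0 ≤ b)
    (hbx : ∀ i, b ≤ x i) {t s : ℕ} (hts : t ≤ s) (hs : s ≤ Fintype.card ι) :
    b ^ (s - t) * ∑ U ∈ (univ : Finset ι).powersetCard t, ∏ i ∈ U, x i ≤
      2 ^ Fintype.card ι * ∑ U ∈ (univ : Finset ι).powersetCard s, ∏ i ∈ U, x i := by
  have hprod : ∀ U : Finset ι, 0 ≤ ∏ i ∈ U, x i :=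
    fun U => prod_nonneg fun i _ => hb.trans (hbx i)
  obtain ⟨T, hT, hsum⟩ :=
    exists_mem_powersetCard_sum_le_two_pow_mul (hts.trans hs) (fun U => ∏ i ∈ U, x i) hprod
  obtain ⟨-, hTcard⟩ := mem_powersetCard.1 hT
  obtain ⟨S, hTS, -, hScard⟩ :=
    exists_subsuperset_card_eq (subset_univ T) (hTcard ▸ hts) (by rwa [card_univ])
  have hS : S ∈ (univ : Finset ι).powersetCard s := mem_powersetCard.2 ⟨subset_univ S, hScard⟩
  calc b ^ (s - t) * ∑ U ∈ (univ : Finset ι).powersetCard t, ∏ i ∈ U, x i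
      ≤ b ^ (s - t) * (2 ^ Fintype.card ι * ∏ i ∈ T, x i) := by gcongr
    _ = 2 ^ Fintype.card ι * (b ^ (#S - #T) * ∏ i ∈ T, x i) := by rw [hScard, hTcard]; ring
    _ ≤ 2 ^ Fintype.card ι * ∏ i ∈ S, x i := by
        gcongr; exact pow_card_sdiff_mul_prod_le_prod hTS hb fun i _ => hbx i
    _ ≤ 2 ^ Fintype.card ι * ∑ U ∈ (univ : Finset ι).powersetCard s, ∏ i ∈ U, x i := by
        gcongr; exact single_le_sum (fun U _ => hprod U) hS

end

/-- with `h_j = ∑_{|S|=j} ∏_{ℓ∈S} |q_ℓ|²`, if `|Im q_ℓ| ≥ a > 0` for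
all `ℓ`, then `h_{m-k} ≥ c a^{2(j-k)} h_{m-j}` for `1 ≤ k ≤ j ≤ m`, where `c > 0`
depends only on `m`. -/
theorem stmt_11 (m : ℕ) :
    ∃ c > (0 : ℝ), ∀ (q : Fin m → ℂ) (a : ℝ), 0 < a →
      (∀ ℓ, a ≤ |(q ℓ).im|) →
      ∀ k j : ℕ, 1 ≤ k → k ≤ j → j ≤ m →
        c * a ^ (2 * (j - k)) *
            (∑ S ∈ (Finset.univ : Finset (Fin m)).powersetCard (m - j),
              ∏ ℓ ∈ S, ‖q ℓ‖ ^ 2) ≤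
          ∑ S ∈ (Finset.univ : Finset (Fin m)).powersetCard (m - k),
            ∏ ℓ ∈ S, ‖q ℓ‖ ^ 2 := by
  refine ⟨(2 ^ m)⁻¹, by positivity, fun q a ha him k j _ hkj hjm => ?_⟩
  have hsq : ∀ ℓ, a ^ 2 ≤ ‖q ℓ‖ ^ 2 := fun ℓ =>
    pow_le_pow_left₀ ha.le ((him ℓ).trans (Complex.abs_im_le_norm _)) 2
  have key := pow_sub_mul_sum_powersetCard_prod_le (sq_nonneg a) hsq
    (Nat.sub_le_sub_left hkj m) (by simp only [Fintype.card_fin]; omega)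
  rw [Fintype.card_fin, ← pow_mul, show m - k - (m - j) = j - k by omega] at key
  rw [mul_assoc, inv_mul_le_iff₀ (by positivity)]
  exact key
end

section
/- Let b' : ℝ^{2(n+1)} → ℝ^k and define φ = ∑_j α_j b_j ⟨ξ⟩_γ^{-1} with fixed constants α_j, and ω = √(φ² + ⟨ξ⟩_γ^{-2δ}). Suppose |φ|² ≤ C₀ |b'|² ⟨ξ⟩_γ^{-2}. Then for any ε > 0: |b'|² + ε²ω^{-2}⟨ξ⟩_γ^{2κ} ≥ c ε² ω² ⟨ξ⟩_γ² for some c > 0 depending only on C₀, where κ = ρ − δ and ρ + δ = 1. -/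
/-!
With `T = ⟨ξ⟩^{-2δ}` we have `ω² = φ² + T`, and `(φ² + T)² ≤ 2φ²ω² + 2T²`. Multiplying by
`⟨ξ⟩²`, the hypothesis on `φ` bounds the first term by `2C₀|b'|²ω²`, while `T²⟨ξ⟩² = ⟨ξ⟩^{2κ}`
because `2κ = 2 - 4δ`. Hence `ω⁴⟨ξ⟩² ≲ |b'|²ω² + ⟨ξ⟩^{2κ}`, and dividing by `ω²` gives the claim
with `c = 1 / (2(C₀ + 1))`.
-/

open Real

lemma rpow_neg_two_mul_sq_mul_rpow_two {X δ κ : ℝ} (hX : 0 < X) (hκ : κ = 1 - 2 * δ) :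
    (X ^ (-(2 * δ))) ^ 2 * X ^ (2 : ℝ) = X ^ (2 * κ) := by
  rw [← rpow_natCast, ← rpow_mul hX.le, ← rpow_add hX, hκ]
  congr 1
  push_cast
  ring

lemma sq_add_mul_le_two_mul_add {φ T Y C B : ℝ} (hT : 0 ≤ T) (hY : 0 ≤ Y)
    (hφ : φ ^ 2 * Y ≤ C * B ^ 2) :
    (φ ^ 2 + T) ^ 2 * Y ≤ 2 * C * B ^ 2 * (φ ^ 2 + T) + 2 * T ^ 2 * Y := by
  have hsq : (φ ^ 2 + T) ^ 2 ≤ 2 * φ ^ 2 * (φ ^ 2 + T) + 2 * T ^ 2 := by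
    nlinarith [sq_nonneg φ, sq_nonneg T]
  calc (φ ^ 2 + T) ^ 2 * Y
      ≤ (2 * φ ^ 2 * (φ ^ 2 + T) + 2 * T ^ 2) * Y := by gcongr
    _ = 2 * (φ ^ 2 * Y) * (φ ^ 2 + T) + 2 * T ^ 2 * Y := by ring
    _ ≤ 2 * (C * B ^ 2) * (φ ^ 2 + T) + 2 * T ^ 2 * Y := by gcongr
    _ = 2 * C * B ^ 2 * (φ ^ 2 + T) + 2 * T ^ 2 * Y := by ring

lemma mul_add_mul_le_add_inv_mul {φ T Y C B ε : ℝ} (hC : 0 ≤ C) (hT : 0 < T) (hY : 0 ≤ Y)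
    (hε : ε ^ 2 ≤ 1) (hφ : φ ^ 2 * Y ≤ C * B ^ 2) :
    1 / (2 * (C + 1)) * ε ^ 2 * (φ ^ 2 + T) * Y ≤ B ^ 2 + ε ^ 2 * (φ ^ 2 + T)⁻¹ * (T ^ 2 * Y) := by
  set w := φ ^ 2 + T
  set c := 1 / (2 * (C + 1)) with hc_def
  have hw : 0 < w := by positivity
  have hcC : 2 * c * C ≤ 1 := by
    rw [show 2 * c * C = C / (C + 1) by rw [hc_def]; field_simp]
    exact (div_le_one (by positivity)).2 (by linarith)
  have hc2 : 2 * c ≤ 1 := by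
    rw [show 2 * c = 1 / (C + 1) by rw [hc_def]; field_simp]
    exact (div_le_one (by positivity)).2 (by linarith)
  have hmain : c * ε ^ 2 * w ^ 2 * Y ≤ B ^ 2 * w + ε ^ 2 * (T ^ 2 * Y) := by
    calc c * ε ^ 2 * w ^ 2 * Y
        = c * ε ^ 2 * (w ^ 2 * Y) := by ring
      _ ≤ c * ε ^ 2 * (2 * C * B ^ 2 * w + 2 * T ^ 2 * Y) := by
          gcongr; exact sq_add_mul_le_two_mul_add hT.le hY hφ
      _ = (2 * c * C) * ε ^ 2 * (B ^ 2 * w) + (2 * c) * (ε ^ 2 * (T ^ 2 * Y)) := by ring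
      _ ≤ 1 * 1 * (B ^ 2 * w) + 1 * (ε ^ 2 * (T ^ 2 * Y)) := by gcongr
      _ = B ^ 2 * w + ε ^ 2 * (T ^ 2 * Y) := by ring
  rw [← mul_le_mul_iff_left₀ hw]
  calc c * ε ^ 2 * w * Y * w
      = c * ε ^ 2 * w ^ 2 * Y := by ring
    _ ≤ B ^ 2 * w + ε ^ 2 * (T ^ 2 * Y) := hmain
    _ = (B ^ 2 + ε ^ 2 * w⁻¹ * (T ^ 2 * Y)) * w := by field_simp

/-- Here `B = |b'|` and `X = ⟨ξ⟩_γ`. -/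
theorem stmt_16 (C₀ : ℝ) (hC₀ : 0 < C₀) :
    ∃ c > (0 : ℝ), ∀ (δ ρ κ : ℝ), 0 < δ → δ < ρ → ρ < 1 → ρ + δ = 1 → κ = ρ - δ →
      ∀ (B X φ ω ε : ℝ), 0 ≤ B → 1 ≤ X → 0 < ε → ε ≤ 1 →
        ω = Real.sqrt (φ ^ 2 + X ^ (-(2 * δ))) →
        φ ^ 2 ≤ C₀ * B ^ 2 * X ^ (-(2 : ℝ)) →
        c * ε ^ 2 * ω ^ 2 * X ^ (2 : ℝ) ≤
          B ^ 2 + ε ^ 2 * ω⁻¹ ^ 2 * X ^ (2 * κ) := by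
  refine ⟨1 / (2 * (C₀ + 1)), by positivity, ?_⟩
  intro δ ρ κ _ _ _ hsum hκ B X φ ω ε _ hX hε hε1 hω hφ
  have hX0 : 0 < X := one_pos.trans_le hX
  have hT : 0 < X ^ (-(2 * δ)) := rpow_pos_of_pos hX0 _
  have hω2 : ω ^ 2 = φ ^ 2 + X ^ (-(2 * δ)) := by
    rw [hω, sq_sqrt (by positivity)]
  have hφ' : φ ^ 2 * X ^ (2 : ℝ) ≤ C₀ * B ^ 2 := by
    rwa [rpow_neg hX0.le, ← div_eq_mul_inv, le_div_iff₀ (rpow_pos_of_pos hX0 _)] at hφ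
  have hε2 : ε ^ 2 ≤ 1 := pow_le_one₀ hε.le hε1
  rw [inv_pow, hω2, ← rpow_neg_two_mul_sq_mul_rpow_two (δ := δ) hX0 (by linarith)]
  exact mul_add_mul_le_add_inv_mul hC₀.le hT (rpow_pos_of_pos hX0 _).le hε2 hφ'
end
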